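/- arXiv:1710.06939 — 3 statements merged into one kernel-verified Lean document; each statement's English description precedes it below -/
import Mathlib

section
/- A partial Mal'tsev operation arising from a connector is unique: if p and q are two functions R ×_X S → X (where R, S are equivalence relations on a set X with a compatible Mal'tsev term t on X in the sense that p and q are restrictions of relations compatible with t) satisfying p(x,y,y) = x, p(y,y,z) = z, q(x,y,y) = x, q(y,y,z) = z, and both p and q preserve the relations R and S (i.e., x S p(x,y,z) and z R p(x,y,z), and similarly for q), and X carries a Mal'tsev operation t compatible with R, S, p, q, then p = q on R ×_X S. (Specialized to groups: if R, S are congruences on a group X, then any connector p(x,y,z) on triples with x R y and y S z satisfying the unit laws and compatibility with the group operation is given by p(x,y,z) = x * y⁻¹ * z.) -/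
theorem connector_unique_groups_general
    {X : Type*} [Group X]
    (R S : X → X → Prop)
    (hR : Equivalence R) (hS : Equivalence S)
    (hRmul : ∀ a b c d : X, R a b → R c d → R (a * c) (b * d))
    (p : ∀ x y z : X, R x y → S y z → X)
    (hp1 : ∀ (x y : X) (hxy : R x y) (hyy : S y y), p x y y hxy hyy = x)
    (hp2 : ∀ (y z : X) (hyy : R y y) (hyz : S y z), p y y z hyy hyz = z)
    (hpmul : ∀ (x y z x' y' z' : X)
      (hxy : R x y) (hyz : S y z) (hxy' : R x' y') (hyz' : S y' z')
      (hxy2 : R (x * x') (y * y')) (hyz2 : S (y * y') (z * z')),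
      p (x * x') (y * y') (z * z') hxy2 hyz2 =
        p x y z hxy hyz * p x' y' z' hxy' hyz')
    : ∀ (x y z : X) (hxy : R x y) (hyz : S y z),
      p x y z hxy hyz = x * y⁻¹ * z := by
  intro x y z hxy hyz
  -- Factor `(x, y, z) = (x * y⁻¹, 1, 1) * (y, y, z)`; the unit laws evaluate `p` on each factor.
  have hxy₁ : R (x * y⁻¹) 1 := by
    simpa using hRmul x y y⁻¹ y⁻¹ hxy (hR.refl _)
  have hfactor := hpmul (x * y⁻¹) 1 1 y y z hxy₁ (hS.refl 1) (hR.refl y) hyz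
    (by simpa using hxy) (by simpa using hyz)
  rw [hp1, hp2] at hfactor
  simpa only [inv_mul_cancel_right, one_mul] using hfactor

/-- Uniqueness of the connector, specialized to groups: if `R`, `S` are
congruences on a group `X`, then any connector `p` defined on triples with
`x R y` and `y S z`, satisfying the unit laws and compatibility with the
group multiplication, is given by `p x y z = x * y⁻¹ * z`. -/
theorem connector_unique_groups
    {X : Type*} [Group X]
    (R S : X → X → Prop)
    (hR : Equivalence R) (hS : Equivalence S)
    (hRmul : ∀ a b c d : X, R a b → R c d → R (a * c) (b * d))
    (hSmul : ∀ a b c d : X, S a b → S c d → S (a * c) (b * d))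
    (p : ∀ x y z : X, R x y → S y z → X)
    (hp1 : ∀ (x y : X) (hxy : R x y) (hyy : S y y), p x y y hxy hyy = x)
    (hp2 : ∀ (y z : X) (hyy : R y y) (hyz : S y z), p y y z hyy hyz = z)
    (hpmul : ∀ (x y z x' y' z' : X)
      (hxy : R x y) (hyz : S y z) (hxy' : R x' y') (hyz' : S y' z')
      (hxy2 : R (x * x') (y * y')) (hyz2 : S (y * y') (z * z')),
      p (x * x') (y * y') (z * z') hxy2 hyz2 =
        p x y z hxy hyz * p x' y' z' hxy' hyz')
    : ∀ (x y z : X) (hxy : R x y) (hyz : S y z),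
      p x y z hxy hyz = x * y⁻¹ * z :=
  connector_unique_groups_general R S hR hS hRmul p hp1 hp2 hpmul
end

section
/- Let (L, ξ, ∂) be a precrossed B-module of Lie algebras and K an ideal of L stable under the B-action. Inside the semidirect product B ⋉ L, the Lie-algebra commutator [{0} × K, ker(1,∂)] of the ideal {(0,k) : k ∈ K} with the ideal {(-∂(l), l) : l ∈ L} is contained in {0} × L, and its image under the projection to L equals the span of elements ∂(l)·k + [k,l] for k ∈ K, l ∈ L. -/
/-!
Write `⟨x, l⟩ := ∂(l)·x + ⁅x, l⁆` and let `S` be the span of the `⟨x, l⟩` with `x ∈ K`. The bracket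
of `(0, x)` with `(-∂ l, l)` is `(0, ⟨x, l⟩)`, so `0 × S` contains all generating brackets of the
commutator. It is moreover a Lie ideal of `B ⋉ L`: `S` is `B`-stable because
`b·⟨x, l⟩ = ⟨x, b·l⟩ + ⟨b·x, l⟩`, and it is an ideal of `L` because `∂⟨m, l⟩ = 0` gives
`⁅m, ⟨x, l⟩⁆ = ⟨x, ⟨m, l⟩⟩ - ⟨⁅x, m⁆, l⟩`. Hence the commutator is exactly `0 × S`.
-/

open Submodule

section Peiffer

variable {k B L : Type*} [CommRing k] [LieRing B] [LieAlgebra k B] [LieRing L] [LieAlgebra k L]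
  (act : B →ₗ[k] L →ₗ[k] L) (d : L →ₗ⁅k⁆ B)

/-- The Peiffer element of `l` and `x`; all of them vanish iff the precrossed module is crossed. -/
def peiffer (x l : L) : L :=
  act (d l) x + ⁅x, l⁆

def peifferSpan (K : LieIdeal k L) : Submodule k L :=
  span k {y | ∃ x ∈ K, ∃ l : L, y = peiffer act d x l}

def semidirectBracket (p q : B × L) : B × L :=
  (⁅p.1, q.1⁆, act p.1 q.2 - act q.1 p.2 + ⁅p.2, q.2⁆)

lemma semidirectBracket_zero_neg (x l : L) :
    semidirectBracket act ((0 : B), x) (-d l, l) = (0, peiffer act d x l) := by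
  simp [semidirectBracket, peiffer]

variable {act d}

lemma peiffer_mem_peifferSpan {K : LieIdeal k L} {x : L} (hx : x ∈ K) (l : L) :
    peiffer act d x l ∈ peifferSpan act d K :=
  subset_span ⟨x, hx, l, rfl⟩

lemma act_peiffer
    (hder : ∀ (b : B) (l l' : L), act b ⁅l, l'⁆ = ⁅act b l, l'⁆ + ⁅l, act b l'⁆)
    (hactLie : ∀ (b b' : B) (l : L), act ⁅b, b'⁆ l = act b (act b' l) - act b' (act b l))
    (hpre : ∀ (b : B) (l : L), d (act b l) = ⁅b, d l⁆) (b : B) (x l : L) :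
    act b (peiffer act d x l) = peiffer act d x (act b l) + peiffer act d (act b x) l := by
  simp only [peiffer, map_add, hder, hpre, hactLie]
  abel

lemma d_peiffer (hpre : ∀ (b : B) (l : L), d (act b l) = ⁅b, d l⁆) (x l : L) :
    d (peiffer act d x l) = 0 := by
  rw [peiffer, map_add, hpre, LieHom.map_lie, ← lie_skew (d x) (d l), add_neg_cancel]

lemma lie_peiffer
    (hder : ∀ (b : B) (l l' : L), act b ⁅l, l'⁆ = ⁅act b l, l'⁆ + ⁅l, act b l'⁆)
    (hpre : ∀ (b : B) (l : L), d (act b l) = ⁅b, d l⁆) (m x l : L) :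
    ⁅m, peiffer act d x l⁆ = peiffer act d x (peiffer act d m l) - peiffer act d ⁅x, m⁆ l := by
  have hm : ⁅m, act (d l) x⁆ = -⁅act (d l) x, m⁆ := (lie_skew _ _).symm
  have hmx : ⁅⁅m, x⁆, l⁆ = -⁅⁅x, m⁆, l⁆ := by rw [← neg_lie, lie_skew]
  have hd : peiffer act d x (peiffer act d m l) = ⁅x, peiffer act d m l⁆ := by
    rw [peiffer, d_peiffer hpre, map_zero, LinearMap.zero_apply, zero_add]
  rw [hd]
  simp only [peiffer, lie_add, leibniz_lie m x l, hder (d l) x m, hm, hmx]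
  abel

variable {K : LieIdeal k L}

lemma act_mem_peifferSpan
    (hder : ∀ (b : B) (l l' : L), act b ⁅l, l'⁆ = ⁅act b l, l'⁆ + ⁅l, act b l'⁆)
    (hactLie : ∀ (b b' : B) (l : L), act ⁅b, b'⁆ l = act b (act b' l) - act b' (act b l))
    (hpre : ∀ (b : B) (l : L), d (act b l) = ⁅b, d l⁆) (hKact : ∀ (b : B), ∀ x ∈ K, act b x ∈ K)
    (b : B) {s : L} (hs : s ∈ peifferSpan act d K) : act b s ∈ peifferSpan act d K := by
  suffices peifferSpan act d K ≤ (peifferSpan act d K).comap (act b) from this hs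
  refine span_le.mpr ?_
  rintro _ ⟨x, hx, l, rfl⟩
  rw [SetLike.mem_coe, mem_comap, act_peiffer hder hactLie hpre]
  exact add_mem (peiffer_mem_peifferSpan hx _) (peiffer_mem_peifferSpan (hKact b x hx) l)

lemma lie_mem_peifferSpan
    (hder : ∀ (b : B) (l l' : L), act b ⁅l, l'⁆ = ⁅act b l, l'⁆ + ⁅l, act b l'⁆)
    (hpre : ∀ (b : B) (l : L), d (act b l) = ⁅b, d l⁆) (m : L) {s : L}
    (hs : s ∈ peifferSpan act d K) : ⁅m, s⁆ ∈ peifferSpan act d K := by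
  suffices peifferSpan act d K ≤ (peifferSpan act d K).comap (LieModule.toEnd k L L m) from this hs
  refine span_le.mpr ?_
  rintro _ ⟨x, hx, l, rfl⟩
  rw [SetLike.mem_coe, mem_comap, LieModule.toEnd_apply_apply, lie_peiffer hder hpre]
  exact sub_mem (peiffer_mem_peifferSpan hx _)
    (peiffer_mem_peifferSpan (lie_mem_left k L K x m hx) l)

lemma semidirectBracket_mem_bot_prod
    (hder : ∀ (b : B) (l l' : L), act b ⁅l, l'⁆ = ⁅act b l, l'⁆ + ⁅l, act b l'⁆)
    (hactLie : ∀ (b b' : B) (l : L), act ⁅b, b'⁆ l = act b (act b' l) - act b' (act b l))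
    (hpre : ∀ (b : B) (l : L), d (act b l) = ⁅b, d l⁆) (hKact : ∀ (b : B), ∀ x ∈ K, act b x ∈ K)
    (y : B × L) {x : B × L} (hx : x ∈ (⊥ : Submodule k B).prod (peifferSpan act d K)) :
    semidirectBracket act y x ∈ (⊥ : Submodule k B).prod (peifferSpan act d K) := by
  obtain ⟨hx₁, hx₂⟩ := mem_prod.mp hx
  rw [mem_bot] at hx₁
  refine mem_prod.mpr ⟨by simp [semidirectBracket, hx₁], ?_⟩
  rw [semidirectBracket, hx₁, map_zero, LinearMap.zero_apply, sub_zero]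
  exact add_mem (act_mem_peifferSpan hder hactLie hpre hKact y.1 hx₂)
    (lie_mem_peifferSpan hder hpre y.2 hx₂)

end Peiffer

/-- Inside the semidirect product `B ⋉ L` of a precrossed `B`-module
`(L,ξ,∂)`, the Lie commutator `[{0} × K, ker (1,∂)]` (the Lie ideal generated
by brackets of elements of the ideals `{0} × K` and `{(-∂ l, l)}`) is
contained in `{0} × L`, and its image under the projection to `L` is the
span of the elements `∂(l)·k + ⁅k, l⁆` for `k ∈ K`, `l ∈ L`. -/
theorem semidirect_commutator_ideal
    {k B L : Type*} [Field k]
    [LieRing B] [LieAlgebra k B] [LieRing L] [LieAlgebra k L]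
    (act : B →ₗ[k] L →ₗ[k] L)
    (hder : ∀ (b : B) (l l' : L),
      act b ⁅l, l'⁆ = ⁅act b l, l'⁆ + ⁅l, act b l'⁆)
    (hactLie : ∀ (b b' : B) (l : L),
      act ⁅b, b'⁆ l = act b (act b' l) - act b' (act b l))
    (d : L →ₗ⁅k⁆ B)
    (hpre : ∀ (b : B) (l : L), d (act b l) = ⁅b, d l⁆)
    (K : LieIdeal k L)
    (hKact : ∀ (b : B), ∀ x ∈ K, act b x ∈ K)
    -- the semidirect product bracket on `B × L`
    (sbr : B × L → B × L → B × L)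
    (hsbr : ∀ p q : B × L,
      sbr p q = (⁅p.1, q.1⁆, act p.1 q.2 - act q.1 p.2 + ⁅p.2, q.2⁆))
    -- the two ideals `{0} × K` and `ker (1,∂)`
    (A C : Set (B × L))
    (hA : A = {p : B × L | p.1 = 0 ∧ p.2 ∈ K})
    (hC : C = {p : B × L | ∃ l : L, p = (-(d l), l)})
    -- the Lie commutator `[A, C]`: the smallest submodule containing all
    -- brackets of elements of `A` and `C` and stable under bracketing
    (comm : Submodule k (B × L))
    (hcomm : comm = sInf {P : Submodule k (B × L) |
      (∀ x ∈ P, ∀ y : B × L, sbr y x ∈ P) ∧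
      (∀ a ∈ A, ∀ c ∈ C, sbr a c ∈ P)}) :
    (∀ p ∈ comm, p.1 = 0) ∧
    Submodule.map (LinearMap.snd k B L) comm =
      Submodule.span k
        {x : L | ∃ kk ∈ K, ∃ l : L, x = act (d l) kk + ⁅kk, l⁆} := by
  subst hA hC
  obtain rfl : sbr = semidirectBracket act := funext₂ hsbr
  have hle : comm ≤ (⊥ : Submodule k B).prod (peifferSpan act d K) := by
    rw [hcomm]
    refine sInf_le ⟨fun x hx y => semidirectBracket_mem_bot_prod hder hactLie hpre hKact y hx, ?_⟩
    rintro a ⟨ha₁, ha₂⟩ c ⟨l, rfl⟩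
    rw [← Prod.mk.eta (p := a), ha₁, semidirectBracket_zero_neg]
    exact mem_prod.mpr ⟨zero_mem _, peiffer_mem_peifferSpan ha₂ l⟩
  have hgen : ∀ x ∈ K, ∀ l : L, ((0 : B), peiffer act d x l) ∈ comm := fun x hx l => by
    rw [hcomm, ← semidirectBracket_zero_neg]
    exact mem_sInf.mpr fun P hP => hP.2 _ ⟨rfl, hx⟩ _ ⟨l, rfl⟩
  change _ ∧ _ = peifferSpan act d K
  refine ⟨fun p hp => (mem_bot k).mp (mem_prod.mp (hle hp)).1, le_antisymm ?_ ?_⟩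
  · exact map_le_iff_le_comap.mpr fun p hp => (mem_prod.mp (hle hp)).2
  · refine span_le.mpr ?_
    rintro _ ⟨x, hx, l, rfl⟩
    exact ⟨_, hgen x hx l, rfl⟩
end

section
/- Two congruences R_M and R_N on a group X (corresponding to normal subgroups M and N) admit a connector — a function p : {(x,y,z) : x R_M y, y R_N z} → X that is a partial group homomorphism satisfying p(x,y,y) = x and p(y,y,z) = z — if and only if the group commutator [M, N] is trivial. -/
/-!
Evaluating a connector at `(m, 1, n)` in two ways, via `(m, 1, 1) · (1, 1, n)` and via
`(1, 1, n) · (m, 1, 1)`, gives `m n = n m`, so `M` and `N` commute elementwise.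
Conversely, if they do, the Mal'tsev term `x y⁻¹ z` is a connector.
-/

namespace Subgroup

variable {X : Type*} [Group X] {M N : Subgroup X}

def IsConnector (M N : Subgroup X) (p : ∀ x y z : X, x * y⁻¹ ∈ M → y * z⁻¹ ∈ N → X) : Prop :=
  (∀ (x y : X) (h1 : x * y⁻¹ ∈ M) (h2 : y * y⁻¹ ∈ N), p x y y h1 h2 = x) ∧
  (∀ (y z : X) (h1 : y * y⁻¹ ∈ M) (h2 : y * z⁻¹ ∈ N), p y y z h1 h2 = z) ∧
  (∀ (x y z x' y' z' : X)
    (h1 : x * y⁻¹ ∈ M) (h2 : y * z⁻¹ ∈ N)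
    (h1' : x' * y'⁻¹ ∈ M) (h2' : y' * z'⁻¹ ∈ N)
    (h1'' : (x * x') * (y * y')⁻¹ ∈ M)
    (h2'' : (y * y') * (z * z')⁻¹ ∈ N),
    p (x * x') (y * y') (z * z') h1'' h2'' = p x y z h1 h2 * p x' y' z' h1' h2')

theorem IsConnector.le_centralizer {p : ∀ x y z : X, x * y⁻¹ ∈ M → y * z⁻¹ ∈ N → X}
    (hp : IsConnector M N p) : M ≤ centralizer N := by
  obtain ⟨hright, hleft, hmul⟩ := hp
  intro m hm
  rw [mem_centralizer_iff]
  intro n hn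
  have hmM : m * 1⁻¹ ∈ M := by simpa using hm
  have h1M : (1 : X) * 1⁻¹ ∈ M := by simp
  have h1N : (1 : X) * 1⁻¹ ∈ N := by simp
  have hnN : 1 * n⁻¹ ∈ N := by simpa using hn
  have hmn := hmul m 1 1 1 1 n hmM h1N h1M hnN
  have hnm := hmul 1 1 n m 1 1 h1M hnN hmM h1N
  simp only [mul_one, one_mul] at hmn hnm
  rw [hright, hleft] at hmn hnm
  exact (hnm hmM (inv_mem hn)).symm.trans (hmn hmM (inv_mem hn))

theorem isConnector_mul_inv_mul (hN : N.Normal) (hMN : M ≤ centralizer N) :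
    IsConnector M N (fun x y z _ _ => x * y⁻¹ * z) := by
  refine ⟨fun x y _ _ => by group, fun y z _ _ => by group, ?_⟩
  intro x y z x' y' z' _ h2 h1' _ _ _
  have hyz : y⁻¹ * z ∈ N := by simpa using inv_mem (hN.mem_comm h2)
  have hcomm : y⁻¹ * z * (x' * y'⁻¹) = x' * y'⁻¹ * (y⁻¹ * z) :=
    mem_centralizer_iff.mp (hMN h1') _ hyz
  calc x * x' * (y * y')⁻¹ * (z * z')
      = x * (x' * y'⁻¹ * (y⁻¹ * z)) * z' := by group
    _ = x * (y⁻¹ * z * (x' * y'⁻¹)) * z' := by rw [hcomm]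
    _ = x * y⁻¹ * z * (x' * y'⁻¹ * z') := by group

end Subgroup

open Subgroup in
theorem connector_exists_iff_commutator_trivial_general
    {X : Type*} [Group X]
    (M N : Subgroup X) (hN : N.Normal) :
    (∃ p : ∀ x y z : X, x * y⁻¹ ∈ M → y * z⁻¹ ∈ N → X,
      (∀ (x y : X) (h1 : x * y⁻¹ ∈ M) (h2 : y * y⁻¹ ∈ N),
        p x y y h1 h2 = x) ∧
      (∀ (y z : X) (h1 : y * y⁻¹ ∈ M) (h2 : y * z⁻¹ ∈ N),
        p y y z h1 h2 = z) ∧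
      (∀ (x y z x' y' z' : X)
        (h1 : x * y⁻¹ ∈ M) (h2 : y * z⁻¹ ∈ N)
        (h1' : x' * y'⁻¹ ∈ M) (h2' : y' * z'⁻¹ ∈ N)
        (h1'' : (x * x') * (y * y')⁻¹ ∈ M)
        (h2'' : (y * y') * (z * z')⁻¹ ∈ N),
        p (x * x') (y * y') (z * z') h1'' h2'' =
          p x y z h1 h2 * p x' y' z' h1' h2')) ↔
      ⁅M, N⁆ = (⊥ : Subgroup X) := by
  change (∃ p, IsConnector M N p) ↔ _
  rw [commutator_eq_bot_iff_le_centralizer]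
  exact ⟨fun ⟨_, hp⟩ => hp.le_centralizer, fun hMN => ⟨_, isConnector_mul_inv_mul hN hMN⟩⟩

/-- Two congruences `R_M`, `R_N` on a group `X` (corresponding to normal
subgroups `M`, `N`) admit a connector — a partial Mal'tsev operation on
triples `(x,y,z)` with `x R_M y`, `y R_N z`, compatible with multiplication
and satisfying the unit laws — if and only if `[M, N] = 1`. -/
theorem connector_exists_iff_commutator_trivial
    {X : Type*} [Group X]
    (M N : Subgroup X) (hM : M.Normal) (hN : N.Normal) :
    (∃ p : ∀ x y z : X, x * y⁻¹ ∈ M → y * z⁻¹ ∈ N → X,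
      (∀ (x y : X) (h1 : x * y⁻¹ ∈ M) (h2 : y * y⁻¹ ∈ N),
        p x y y h1 h2 = x) ∧
      (∀ (y z : X) (h1 : y * y⁻¹ ∈ M) (h2 : y * z⁻¹ ∈ N),
        p y y z h1 h2 = z) ∧
      (∀ (x y z x' y' z' : X)
        (h1 : x * y⁻¹ ∈ M) (h2 : y * z⁻¹ ∈ N)
        (h1' : x' * y'⁻¹ ∈ M) (h2' : y' * z'⁻¹ ∈ N)
        (h1'' : (x * x') * (y * y')⁻¹ ∈ M)
        (h2'' : (y * y') * (z * z')⁻¹ ∈ N),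
        p (x * x') (y * y') (z * z') h1'' h2'' =
          p x y z h1 h2 * p x' y' z' h1' h2')) ↔
      ⁅M, N⁆ = (⊥ : Subgroup X) :=
  connector_exists_iff_commutator_trivial_general M N hN
end
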